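/- arXiv:2503.23340 — 2 statements merged into one kernel-verified Lean document; each statement's English description precedes it below -/
import Mathlib

section
/- Let U be a finite set, k ∈ ℕ, m ≥ 1, let g : (k+1)^U → ℝ be monotonically non-decreasing and k-submodular with g(∅,…,∅) ≥ 0, and let c be a non-negative modular function with c(∅,…,∅) = 0, i.e. c(𝐒) = Σ_{i=1}^k Σ_{e∈S_i} c({e}) with each c({e}) ≥ 0. Fix 𝐕 ∈ (k+1)^U. Let (𝐒_i)_{i=0}^m be the iterates of the generalized distorted greedy algorithm: 𝐒_0 = (∅,…,∅); at step i ∈ {0,…,m−1}, pick (j*, e*) maximizing, over j ∈ ⟦k⟧ and e ∈ V_j \ S_{i,j}, the quantity (1 − 1/m)^{m−(i+1)} Δ_{e,j} g(𝐒_i) − c({e}); if this maximal quantity is > 0 set S_{i+1,j*} = S_{i,j*} ∪ {e*} and S_{i+1,l} = S_{i,l} for l ≠ j*, otherwise set 𝐒_{i+1} = 𝐒_i. Let OPT be a maximizer of g(𝐒) − c(𝐒) over {𝐒 ≼ 𝐕 : |supp(𝐒)| ≤ m}. Then g(𝐒_m) − c(𝐒_m) ≥ (1 − e^{−1}) g(OPT)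 − c(OPT). -/
/-- A `k`-tuple of subsets is pairwise disjoint (i.e. it is an element of `(k+1)^U`). -/
def PwDisj {α : Type*} {k : ℕ} (S : Fin k → Finset α) : Prop :=
  ∀ i j : Fin k, i ≠ j → Disjoint (S i) (S j)

/-- The meet `𝐒 ⊓ 𝐓`, with `i`-th component `S i ∩ T i`. -/
def kInf {α : Type*} [DecidableEq α] {k : ℕ} (S T : Fin k → Finset α) :
    Fin k → Finset α := fun i => S i ∩ T i

/-- The join `𝐒 ⊔ 𝐓`, with `i`-th component `(S i ∪ T i) \ ∪_{j ≠ i} (S j ∪ T j)`. -/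
def kSup {α : Type*} [DecidableEq α] {k : ℕ} (S T : Fin k → Finset α) :
    Fin k → Finset α :=
  fun i => (S i ∪ T i) \ ((Finset.univ.erase i).biUnion fun j => S j ∪ T j)

/-- The value of the modular function determined by the singleton costs `c` on a tuple. -/
def cSet {α : Type*} {k : ℕ} (c : α → ℝ) (S : Fin k → Finset α) : ℝ :=
  ∑ i, ∑ e ∈ S i, c e

/-- The distorted marginal quantity
`(1 − 1/m)^{m−(i+1)} Δ_{e,j} g(𝐒) − c({e})` used by the generalized distorted greedy
algorithm at step `i`. -/
noncomputable def qGain {α : Type*} [DecidableEq α] {k : ℕ}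
    (g : (Fin k → Finset α) → ℝ) (c : α → ℝ) (m i : ℕ)
    (S : Fin k → Finset α) (j : Fin k) (e : α) : ℝ :=
  ((1 : ℝ) - 1 / (m : ℝ)) ^ (m - (i + 1)) *
      (g (Function.update S j (insert e (S j))) - g S) - c e

/-! The potential `Φ_i(𝐒) = (1 − 1/m)^{m−i} g(𝐒) − c(𝐒)` grows at step `i` by at least
`(1/m)((1 − 1/m)^{m−i−1} g(OPT) − c(OPT))`. Indeed, `k`-submodularity makes marginal gains
non-increasing along `≼`, so `g(OPT) − g(𝐒_i)` is at most the sum of the marginal gains at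
`𝐒_i` of the at most `m` elements of `OPT` not yet chosen, and the greedy choice dominates
each of the corresponding distorted gains. Summing the geometric weights over `i` gives
`(1 − (1 − 1/m)^m) g(OPT) − c(OPT) ≤ Φ_m(𝐒_m) − Φ_0(∅)`, and `(1 − 1/m)^m ≤ e^{−1}`. -/

open Finset

section KSubmodular

variable {α : Type*} {k : ℕ}

theorem PwDisj.mono {S T : Fin k → Finset α} (hT : PwDisj T) (h : S ≤ T) : PwDisj S :=
  fun i j hij => (hT i j hij).mono (h i) (h j)

def IsKMonotone (g : (Fin k → Finset α) → ℝ) : Prop :=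
  ∀ S T : Fin k → Finset α, PwDisj S → PwDisj T → S ≤ T → g S ≤ g T

variable [DecidableEq α]

def IsKSubmodular (g : (Fin k → Finset α) → ℝ) : Prop :=
  ∀ S T : Fin k → Finset α, PwDisj S → PwDisj T → g (kInf S T) + g (kSup S T) ≤ g S + g T

def insertAt (S : Fin k → Finset α) (j : Fin k) (e : α) : Fin k → Finset α :=
  Function.update S j (insert e (S j))

def marginalGain (g : (Fin k → Finset α) → ℝ) (S : Fin k → Finset α) (j : Fin k) (e : α) :
    ℝ :=
  g (insertAt S j e) - g S

variable {S T Z : Fin k → Finset α} {j l : Fin k} {e : α}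

@[simp]
theorem insertAt_self : insertAt S j e j = insert e (S j) :=
  Function.update_self _ _ _

@[simp]
theorem insertAt_of_ne (h : l ≠ j) : insertAt S j e l = S l :=
  Function.update_of_ne h _ _

theorem le_insertAt : S ≤ insertAt S j e := by
  intro l
  rcases eq_or_ne l j with rfl | h
  · simp [subset_insert]
  · simp [h]

theorem insertAt_le (hSZ : S ≤ Z) (he : e ∈ Z j) : insertAt S j e ≤ Z := by
  intro l
  rcases eq_or_ne l j with rfl | h
  · simpa using insert_subset he (hSZ l)
  · simpa [h] using hSZ l

theorem insertAt_mono (h : S ≤ T) : insertAt S j e ≤ insertAt T j e := by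
  intro l
  rcases eq_or_ne l j with rfl | hl
  · simpa using insert_subset_insert e (h l)
  · simpa [hl] using h l

theorem PwDisj.notMem_of_mem_sdiff (hZ : PwDisj Z) (hSZ : S ≤ Z) (he : e ∈ Z j \ S j)
    (l : Fin k) : e ∉ S l := by
  obtain ⟨heZ, heS⟩ := mem_sdiff.mp he
  rcases eq_or_ne l j with rfl | hlj
  · exact heS
  · exact fun heS' => disjoint_left.mp (hZ l j hlj) (hSZ l heS') heZ

theorem PwDisj.insertAt (hS : PwDisj S) (he : ∀ l, e ∉ S l) : PwDisj (insertAt S j e) := by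
  intro a b hab
  rcases eq_or_ne a j with rfl | ha
  · simpa [Ne.symm hab, he b] using hS a b hab
  rcases eq_or_ne b j with rfl | hb
  · simpa [ha, he a] using hS a b hab
  · simpa [ha, hb] using hS a b hab

theorem kInf_insertAt (hST : S ≤ T) (he : e ∉ T j) : kInf (insertAt S j e) T = S := by
  funext l
  rcases eq_or_ne l j with rfl | h
  · simp [kInf, insert_inter_of_notMem he, inter_eq_left.mpr (hST l)]
  · simp [kInf, h, inter_eq_left.mpr (hST l)]

theorem kSup_insertAt (hT : PwDisj T) (hST : S ≤ T) (he : ∀ l, e ∉ T l) :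
    kSup (insertAt S j e) T = insertAt T j e := by
  have hunion : ∀ l, insertAt S j e l ∪ T l = insertAt T j e l := by
    intro l
    rcases eq_or_ne l j with rfl | h
    · simp [insert_union, union_eq_right.mpr (hST l)]
    · simp [h, union_eq_right.mpr (hST l)]
  have hW : PwDisj (insertAt T j e) := hT.insertAt he
  funext i
  simp only [kSup, hunion]
  exact sdiff_eq_self_of_disjoint
    ((disjoint_biUnion_right _ _ _).mpr fun l hl => hW i l (ne_of_mem_erase hl).symm)

theorem IsKSubmodular.marginalGain_le {g : (Fin k → Finset α) → ℝ} (hg : IsKSubmodular g)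
    (hT : PwDisj T) (hST : S ≤ T) (he : ∀ l, e ∉ T l) :
    marginalGain g T j e ≤ marginalGain g S j e := by
  have h := hg (insertAt S j e) T ((hT.insertAt he).mono (insertAt_mono hST)) hT
  rw [kInf_insertAt hST (he j), kSup_insertAt hT hST he] at h
  unfold marginalGain
  linarith

theorem sum_sum_sdiff_eq_add_sum_sum_sdiff_insertAt {M : Type*} [AddCommMonoid M]
    (f : Fin k → α → M) (he : e ∈ Z j \ S j) :
    ∑ l, ∑ x ∈ Z l \ S l, f l x = f j e + ∑ l, ∑ x ∈ Z l \ insertAt S j e l, f l x := by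
  rw [← add_sum_erase _ _ (mem_univ j), ← add_sum_erase _ _ (mem_univ j), insertAt_self,
    sdiff_insert, ← add_sum_erase _ _ he, add_assoc]
  congr 2
  exact sum_congr rfl fun l hl => by rw [insertAt_of_ne (ne_of_mem_erase hl)]

theorem IsKSubmodular.sub_le_sum_marginalGain {g : (Fin k → Finset α) → ℝ}
    (hg : IsKSubmodular g) (hZ : PwDisj Z) (hSZ : S ≤ Z) :
    g Z - g S ≤ ∑ j, ∑ e ∈ Z j \ S j, marginalGain g S j e := by
  obtain ⟨n, hn⟩ : ∃ n, ∑ j, #(Z j \ S j) = n := ⟨_, rfl⟩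
  induction n generalizing S with
  | zero =>
    obtain rfl : S = Z := le_antisymm hSZ fun j =>
      sdiff_eq_empty_iff_subset.mp (card_eq_zero.mp (sum_eq_zero_iff.mp hn j (mem_univ j)))
    simp
  | succ n ih =>
    obtain ⟨j, -, hj⟩ := exists_ne_zero_of_sum_ne_zero (by rw [hn]; exact n.succ_ne_zero)
    obtain ⟨e, he⟩ := card_ne_zero.mp hj
    have hS'Z : insertAt S j e ≤ Z := insertAt_le hSZ (mem_sdiff.mp he).1
    have hcard : ∑ l, #(Z l \ insertAt S j e l) = n := by
      have h := sum_sum_sdiff_eq_add_sum_sum_sdiff_insertAt (fun _ _ => 1) he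
      simp only [sum_const, smul_eq_mul, mul_one] at h
      omega
    calc g Z - g S = (g Z - g (insertAt S j e)) + marginalGain g S j e := by
          unfold marginalGain; ring
      _ ≤ ∑ l, ∑ x ∈ Z l \ insertAt S j e l, marginalGain g (insertAt S j e) l x
            + marginalGain g S j e := by
          gcongr; exact ih hS'Z hcard
      _ ≤ ∑ l, ∑ x ∈ Z l \ insertAt S j e l, marginalGain g S l x + marginalGain g S j e := by
          gcongr with l _ x hx
          exact hg.marginalGain_le (hZ.mono hS'Z) le_insertAt (hZ.notMem_of_mem_sdiff hS'Z hx)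
      _ = _ := by rw [sum_sum_sdiff_eq_add_sum_sum_sdiff_insertAt _ he, add_comm]

end KSubmodular

theorem one_sub_one_div_nonneg (m : ℕ) : 0 ≤ 1 - 1 / (m : ℝ) :=
  sub_nonneg.mpr (one_div (m : ℝ) ▸ Nat.cast_inv_le_one m)

noncomputable def distortedObjective {α : Type*} {k : ℕ} (g : (Fin k → Finset α) → ℝ)
    (c : α → ℝ) (m i : ℕ) (S : Fin k → Finset α) : ℝ :=
  (1 - 1 / (m : ℝ)) ^ (m - i) * g S - cSet c S

section DistortedGreedy

variable {α : Type*} [DecidableEq α] {k : ℕ} {g : (Fin k → Finset α) → ℝ} {c : α → ℝ}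
  {S S' T V : Fin k → Finset α} {j : Fin k} {e : α} {m i : ℕ}

theorem cSet_insertAt (he : e ∉ S j) : cSet c (insertAt S j e) = cSet c S + c e := by
  have hsplit (F : Fin k → Finset α) :
      cSet c F = ∑ x ∈ F j, c x + ∑ l ∈ univ.erase j, ∑ x ∈ F l, c x :=
    (add_sum_erase _ _ (mem_univ j)).symm
  have hrest : ∑ l ∈ univ.erase j, ∑ x ∈ insertAt S j e l, c x =
      ∑ l ∈ univ.erase j, ∑ x ∈ S l, c x :=
    sum_congr rfl fun l hl => by rw [insertAt_of_ne (ne_of_mem_erase hl)]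
  rw [hsplit, hsplit S, insertAt_self, sum_insert he, hrest]
  ring

theorem qGain_eq_marginalGain :
    qGain g c m i S j e = (1 - 1 / (m : ℝ)) ^ (m - (i + 1)) * marginalGain g S j e - c e :=
  rfl

theorem sub_cSet_le_sum_marginalGain (hg : IsKSubmodular g) (hmono : IsKMonotone g)
    (hc : ∀ e, 0 ≤ c e) {w : ℝ} (hw : 0 ≤ w) (hV : PwDisj V) (hSV : S ≤ V) (hTV : T ≤ V) :
    w * (g T - g S) - cSet c T ≤ ∑ j, ∑ e ∈ T j \ S j, (w * marginalGain g S j e - c e) := by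
  have hZ : PwDisj (S ⊔ T) := hV.mono (sup_le hSV hTV)
  have hgT : g T ≤ g (S ⊔ T) := hmono _ _ (hV.mono hTV) hZ le_sup_right
  have hsum := hg.sub_le_sum_marginalGain hZ le_sup_left
  simp only [Pi.sup_apply, sup_eq_union, union_sdiff_left] at hsum
  have hcT : ∑ j, ∑ e ∈ T j \ S j, c e ≤ cSet c T :=
    sum_le_sum fun j _ => sum_le_sum_of_subset_of_nonneg sdiff_subset fun e _ _ => hc e
  have h := mul_le_mul_of_nonneg_left (hgT.trans (sub_le_iff_le_add'.mp hsum)) hw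
  simp only [sum_sub_distrib, ← mul_sum]
  linarith

theorem distortedObjective_succ_sub (hi : i < m) (he : e ∉ S j)
    (hpos : 0 < qGain g c m i S j e → S' = insertAt S j e)
    (hnonpos : ¬ 0 < qGain g c m i S j e → S' = S) :
    distortedObjective g c m (i + 1) S' - distortedObjective g c m i S =
      max 0 (qGain g c m i S j e) + 1 / m * (1 - 1 / (m : ℝ)) ^ (m - (i + 1)) * g S := by
  have hpow : (1 - 1 / (m : ℝ)) ^ (m - i) =
      (1 - 1 / (m : ℝ)) * (1 - 1 / (m : ℝ)) ^ (m - (i + 1)) := by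
    rw [← pow_succ', show m - (i + 1) + 1 = m - i by omega]
  unfold distortedObjective
  by_cases hq : 0 < qGain g c m i S j e
  · rw [hpos hq, max_eq_right hq.le, cSet_insertAt he, hpow, qGain_eq_marginalGain,
      marginalGain]
    ring
  · rw [hnonpos hq, max_eq_left (not_lt.mp hq), hpow]
    ring

theorem sub_cSet_le_mul_max_qGain (hg : IsKSubmodular g) (hmono : IsKMonotone g)
    (hc : ∀ e, 0 ≤ c e) (hV : PwDisj V) (hSV : S ≤ V) (hTV : T ≤ V)
    (hTcard : #(univ.biUnion T) ≤ m)
    (hmax : ∀ j', ∀ e' ∈ V j' \ S j', qGain g c m i S j' e' ≤ qGain g c m i S j e) :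
    (1 - 1 / (m : ℝ)) ^ (m - (i + 1)) * (g T - g S) - cSet c T ≤
      m * max 0 (qGain g c m i S j e) := by
  have hcount : ∑ l, #(T l \ S l) ≤ m :=
    calc ∑ l, #(T l \ S l) ≤ ∑ l, #(T l) := sum_le_sum fun l _ => card_le_card sdiff_subset
      _ = #(univ.biUnion T) := (card_biUnion fun a _ b _ h => (hV.mono hTV) a b h).symm
      _ ≤ m := hTcard
  calc _ ≤ ∑ l, ∑ x ∈ T l \ S l, qGain g c m i S l x :=
        sub_cSet_le_sum_marginalGain hg hmono hc (pow_nonneg (one_sub_one_div_nonneg m) _) hV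
          hSV hTV
    _ ≤ ∑ l, ∑ _x ∈ T l \ S l, max 0 (qGain g c m i S j e) :=
        sum_le_sum fun l _ => sum_le_sum fun x hx =>
          (hmax l x (sdiff_subset_sdiff (hTV l) le_rfl hx)).trans (le_max_right _ _)
    _ = (∑ l, #(T l \ S l) : ℕ) * max 0 (qGain g c m i S j e) := by
        simp only [sum_const, nsmul_eq_mul, sum_mul, Nat.cast_sum]
    _ ≤ m * max 0 (qGain g c m i S j e) :=
        mul_le_mul_of_nonneg_right (by exact_mod_cast hcount) (le_max_left _ _)

theorem distortedObjective_step (hg : IsKSubmodular g) (hmono : IsKMonotone g)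
    (hc : ∀ e, 0 ≤ c e) (hV : PwDisj V) (hSV : S ≤ V) (hTV : T ≤ V)
    (hTcard : #(univ.biUnion T) ≤ m) (hi : i < m) (hmem : e ∈ V j \ S j)
    (hmax : ∀ j', ∀ e' ∈ V j' \ S j', qGain g c m i S j' e' ≤ qGain g c m i S j e)
    (hpos : 0 < qGain g c m i S j e → S' = insertAt S j e)
    (hnonpos : ¬ 0 < qGain g c m i S j e → S' = S) :
    1 / m * ((1 - 1 / (m : ℝ)) ^ (m - (i + 1)) * g T - cSet c T) ≤
      distortedObjective g c m (i + 1) S' - distortedObjective g c m i S := by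
  have hm : (0 : ℝ) < m := by exact_mod_cast hi.pos
  have h := mul_le_mul_of_nonneg_left (sub_cSet_le_mul_max_qGain hg hmono hc hV hSV hTV hTcard
    hmax) (one_div_nonneg.mpr hm.le)
  rw [← mul_assoc, one_div_mul_cancel hm.ne', one_mul] at h
  rw [distortedObjective_succ_sub hi (mem_sdiff.mp hmem).2 hpos hnonpos]
  linarith

theorem greedy_iterate_le {S : ℕ → Fin k → Finset α} {jsel : ℕ → Fin k} {esel : ℕ → α}
    (hS0 : S 0 = fun _ => ∅) (hsel_mem : ∀ i < m, esel i ∈ V (jsel i) \ S i (jsel i))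
    (hupd : ∀ i < m, S (i + 1) = insertAt (S i) (jsel i) (esel i) ∨ S (i + 1) = S i) :
    ∀ i ≤ m, S i ≤ V := by
  intro i hi
  induction i with
  | zero => rw [hS0]; exact fun _ => empty_subset _
  | succ i ih =>
    rcases hupd i hi with h | h <;> rw [h]
    · exact insertAt_le (ih (by omega)) (mem_sdiff.mp (hsel_mem i hi)).1
    · exact ih (by omega)

end DistortedGreedy

theorem sum_range_one_div_mul_one_sub_one_div_pow (a b : ℝ) {m : ℕ} (hm : m ≠ 0) :
    ∑ i ∈ range m, 1 / m * ((1 - 1 / (m : ℝ)) ^ (m - (i + 1)) * a - b) =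
      (1 - (1 - 1 / (m : ℝ)) ^ m) * a - b := by
  have hgeom : ∑ i ∈ range m, (1 - 1 / (m : ℝ)) ^ (m - (i + 1)) * (1 / m) =
      1 - (1 - 1 / (m : ℝ)) ^ m := by
    rw [← sum_mul, ← geom_sum_mul_neg, sub_sub_cancel,
      ← sum_range_reflect (fun i => (1 - 1 / (m : ℝ)) ^ i)]
    exact congrArg (· * _) (sum_congr rfl fun i _ => by rw [Nat.sub_sub, add_comm])
  have hb : ∑ _i ∈ range m, 1 / (m : ℝ) * b = b := by
    rw [sum_const, card_range, nsmul_eq_mul, ← mul_assoc,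
      mul_one_div_cancel (by exact_mod_cast hm), one_mul]
  rw [← hgeom, sum_mul]
  conv_rhs => rw [← hb, ← sum_sub_distrib]
  exact sum_congr rfl fun i _ => by ring

theorem generalized_distorted_greedy_lower_bound_general
    {α : Type*} [DecidableEq α] {k : ℕ}
    (g : (Fin k → Finset α) → ℝ) (c : α → ℝ) (m : ℕ) (hm : 1 ≤ m)
    (V : Fin k → Finset α) (hV : PwDisj V)
    -- `g` is monotonically non-decreasing and `k`-submodular with `g(∅,…,∅) ≥ 0`
    (hg0 : 0 ≤ g (fun _ => ∅))
    (hgmono : ∀ S T : Fin k → Finset α, PwDisj S → PwDisj T →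
      (∀ i, S i ⊆ T i) → g S ≤ g T)
    (hgsub : ∀ S T : Fin k → Finset α, PwDisj S → PwDisj T →
      g (kInf S T) + g (kSup S T) ≤ g S + g T)
    -- `c` is a non-negative modular function
    (hc : ∀ e : α, 0 ≤ c e)
    -- the iterates of the generalized distorted greedy algorithm
    (S : ℕ → Fin k → Finset α) (jsel : ℕ → Fin k) (esel : ℕ → α)
    (hS0 : S 0 = fun _ => ∅)
    (hsel_mem : ∀ i < m, esel i ∈ V (jsel i) \ S i (jsel i))
    (hsel_max : ∀ i < m, ∀ j : Fin k, ∀ e ∈ V j \ S i j,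
      qGain g c m i (S i) j e ≤ qGain g c m i (S i) (jsel i) (esel i))
    (hupd_pos : ∀ i < m, 0 < qGain g c m i (S i) (jsel i) (esel i) →
      S (i + 1) = Function.update (S i) (jsel i) (insert (esel i) (S i (jsel i))))
    (hupd_nonpos : ∀ i < m, ¬ 0 < qGain g c m i (S i) (jsel i) (esel i) →
      S (i + 1) = S i)
    (OPT : Fin k → Finset α)
    (hOPTle : ∀ i, OPT i ⊆ V i)
    (hOPTcard : (Finset.univ.biUnion OPT).card ≤ m) :
    (1 - Real.exp (-1)) * g OPT - cSet c OPT ≤ g (S m) - cSet c (S m) := by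
  have hSV := greedy_iterate_le hS0 hsel_mem fun i hi =>
    (em _).imp (hupd_pos i hi) (hupd_nonpos i hi)
  have hgain : (1 - (1 - 1 / (m : ℝ)) ^ m) * g OPT - cSet c OPT ≤
      distortedObjective g c m m (S m) - distortedObjective g c m 0 (S 0) := by
    rw [← sum_range_one_div_mul_one_sub_one_div_pow _ _ (by omega),
      ← sum_range_sub fun i => distortedObjective g c m i (S i)]
    exact sum_le_sum fun i hi =>
      have hi := mem_range.mp hi
      distortedObjective_step hgsub hgmono hc hV (hSV i hi.le) hOPTle hOPTcard hi
        (hsel_mem i hi) (hsel_max i hi) (hupd_pos i hi) (hupd_nonpos i hi)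
  have hinit : 0 ≤ distortedObjective g c m 0 (S 0) := by
    simp only [distortedObjective, hS0, cSet, sum_empty, sum_const_zero, sub_zero]
    exact mul_nonneg (pow_nonneg (one_sub_one_div_nonneg m) _) hg0
  have hfinal : distortedObjective g c m m (S m) = g (S m) - cSet c (S m) := by
    simp [distortedObjective]
  have hOPT : 0 ≤ g OPT :=
    hg0.trans (hgmono _ _ (fun _ _ _ => disjoint_empty_left _) (hV.mono hOPTle)
      fun _ => empty_subset _)
  have hexp : (1 - 1 / (m : ℝ)) ^ m ≤ Real.exp (-1) :=
    Real.one_sub_div_pow_le_exp_neg (by exact_mod_cast hm)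
  calc (1 - Real.exp (-1)) * g OPT - cSet c OPT
      ≤ (1 - (1 - 1 / (m : ℝ)) ^ m) * g OPT - cSet c OPT := by gcongr
    _ ≤ g (S m) - cSet c (S m) := by linarith

/-- Theoretical guarantee of the generalized distorted greedy algorithm:
`g(𝐒_m) − c(𝐒_m) ≥ (1 − e^{−1}) g(OPT) − c(OPT)`. -/
theorem generalized_distorted_greedy_lower_bound
    {α : Type*} [Fintype α] [DecidableEq α] {k : ℕ}
    (g : (Fin k → Finset α) → ℝ) (c : α → ℝ) (m : ℕ) (hm : 1 ≤ m)
    (V : Fin k → Finset α) (hV : PwDisj V)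
    -- `g` is monotonically non-decreasing and `k`-submodular with `g(∅,…,∅) ≥ 0`
    (hg0 : 0 ≤ g (fun _ => ∅))
    (hgmono : ∀ S T : Fin k → Finset α, PwDisj S → PwDisj T →
      (∀ i, S i ⊆ T i) → g S ≤ g T)
    (hgsub : ∀ S T : Fin k → Finset α, PwDisj S → PwDisj T →
      g (kInf S T) + g (kSup S T) ≤ g S + g T)
    -- `c` is a non-negative modular function
    (hc : ∀ e : α, 0 ≤ c e)
    -- the iterates of the generalized distorted greedy algorithm
    (S : ℕ → Fin k → Finset α) (jsel : ℕ → Fin k) (esel : ℕ → α)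
    (hS0 : S 0 = fun _ => ∅)
    (hsel_mem : ∀ i < m, esel i ∈ V (jsel i) \ S i (jsel i))
    (hsel_max : ∀ i < m, ∀ j : Fin k, ∀ e ∈ V j \ S i j,
      qGain g c m i (S i) j e ≤ qGain g c m i (S i) (jsel i) (esel i))
    (hupd_pos : ∀ i < m, 0 < qGain g c m i (S i) (jsel i) (esel i) →
      S (i + 1) = Function.update (S i) (jsel i) (insert (esel i) (S i (jsel i))))
    (hupd_nonpos : ∀ i < m, ¬ 0 < qGain g c m i (S i) (jsel i) (esel i) →
      S (i + 1) = S i)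
    -- `OPT` is a maximizer of `g − c` over `{𝐒 ≼ 𝐕 : |supp 𝐒| ≤ m}`
    (OPT : Fin k → Finset α) (hOPTdisj : PwDisj OPT)
    (hOPTle : ∀ i, OPT i ⊆ V i)
    (hOPTcard : (Finset.univ.biUnion OPT).card ≤ m)
    (hOPTmax : ∀ T : Fin k → Finset α, PwDisj T → (∀ i, T i ⊆ V i) →
      (Finset.univ.biUnion T).card ≤ m → g T - cSet c T ≤ g OPT - cSet c OPT) :
    (1 - Real.exp (-1)) * g OPT - cSet c OPT ≤ g (S m) - cSet c (S m) :=
  generalized_distorted_greedy_lower_bound_general g c m hm V hV hg0 hgmono hgsub hc S jsel esel hS0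
    hsel_mem hsel_max hupd_pos hupd_nonpos OPT hOPTle hOPTcard
end

section
/- Let P be a π-stationary transition matrix on the finite product state space X = X^(1) × … × X^(d), where π is of product form, let k ∈ ℕ and fix 𝐕 = (V_1,…,V_k) ∈ (k+1)^⟦d⟧. Then the map 𝐒 = (S_1,…,S_k) ↦ D(⊗_{i=1}^k P^(V_i \ S_i) ‖ ⊗_{i=1}^k Π^(V_i \ S_i)) = Σ_{i=1}^k D(P^(V_i \ S_i) ‖ Π^(V_i \ S_i)), defined on {𝐒 ∈ (k+1)^⟦d⟧ : 𝐒 ≼ 𝐕}, is monotonically non-increasing and k-supermodular. -/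
open scoped Classical

noncomputable section

variable {d : ℕ}

/-- Restriction of a global state to the coordinates in `S`. -/
def restrict (𝒳 : Fin d → Type) (S : Finset (Fin d)) (x : ∀ i, 𝒳 i) :
    ∀ i : S, 𝒳 i.1 := fun i => x i.1

/-- Marginal of `π` on the coordinates in `S`. -/
def marginal (𝒳 : Fin d → Type) [∀ i, Fintype (𝒳 i)]
    (π : (∀ i, 𝒳 i) → ℝ) (S : Finset (Fin d)) (z : ∀ i : S, 𝒳 i.1) : ℝ :=
  ∑ x : ∀ i, 𝒳 i, if restrict 𝒳 S x = z then π x else 0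

/-- Keep-`S`-in transition matrix of `P` with respect to `π`. -/
def keepIn (𝒳 : Fin d → Type) [∀ i, Fintype (𝒳 i)]
    (π : (∀ i, 𝒳 i) → ℝ) (P : (∀ i, 𝒳 i) → (∀ i, 𝒳 i) → ℝ)
    (S : Finset (Fin d)) (z w : ∀ i : S, 𝒳 i.1) : ℝ :=
  (∑ x : ∀ i, 𝒳 i, ∑ y : ∀ i, 𝒳 i,
      if restrict 𝒳 S x = z ∧ restrict 𝒳 S y = w then π x * P x y else 0) /
    marginal 𝒳 π S z

/-- Entropy rate of a transition matrix `M` with respect to `μ`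
    (with the convention `0 ln 0 = 0`). -/
def entRate {Y : Type*} [Fintype Y] (μ : Y → ℝ) (M : Y → Y → ℝ) : ℝ :=
  -∑ x, ∑ y, μ x * M x y * Real.log (M x y)

/-- KL divergence rate from `L` to `M` with respect to `μ`
    (with the convention `0 ln (0/a) = 0`). -/
def klRate {Y : Type*} [Fintype Y] (μ : Y → ℝ) (M L : Y → Y → ℝ) : ℝ :=
  ∑ x, ∑ y, μ x * M x y * Real.log (M x y / L x y)

/-- Keep-`{i}`-in single-coordinate transition matrix `P^(i)`. -/
def single (𝒳 : Fin d → Type) [∀ i, Fintype (𝒳 i)]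
    (π : (∀ i, 𝒳 i) → ℝ) (P : (∀ i, 𝒳 i) → (∀ i, 𝒳 i) → ℝ)
    (i : Fin d) (a b : 𝒳 i) : ℝ :=
  (∑ x : ∀ j, 𝒳 j, ∑ y : ∀ j, 𝒳 j, if x i = a ∧ y i = b then π x * P x y else 0) /
    (∑ x : ∀ j, 𝒳 j, if x i = a then π x else 0)

/-- Tensor product over `S` of the single-coordinate matrices `P^(i)`, `i ∈ S`. -/
def indepKernel (𝒳 : Fin d → Type) [∀ i, Fintype (𝒳 i)]
    (π : (∀ i, 𝒳 i) → ℝ) (P : (∀ i, 𝒳 i) → (∀ i, 𝒳 i) → ℝ)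
    (S : Finset (Fin d)) (z w : ∀ i : S, 𝒳 i.1) : ℝ :=
  ∏ i : S, single 𝒳 π P i.1 (z i) (w i)

/-- Distance to independence `𝕀(P^(S)) = D(P^(S) ‖ ⊗_{i ∈ S} P^(i))`. -/
def distToIndep (𝒳 : Fin d → Type) [∀ i, Fintype (𝒳 i)]
    (π : (∀ i, 𝒳 i) → ℝ) (P : (∀ i, 𝒳 i) → (∀ i, 𝒳 i) → ℝ)
    (S : Finset (Fin d)) : ℝ :=
  klRate (marginal 𝒳 π S) (keepIn 𝒳 π P S) (indepKernel 𝒳 π P S)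

/-- Entropy rate `H(P^(S))` of the keep-`S`-in transition matrix. -/
def entKeepIn (𝒳 : Fin d → Type) [∀ i, Fintype (𝒳 i)]
    (π : (∀ i, 𝒳 i) → ℝ) (P : (∀ i, 𝒳 i) → (∀ i, 𝒳 i) → ℝ)
    (S : Finset (Fin d)) : ℝ :=
  entRate (marginal 𝒳 π S) (keepIn 𝒳 π P S)

/-- Distance to stationarity `D(P^(S) ‖ Π^(S))`, where every row of `Π^(S)` is `π^(S)`. -/
def distToStat (𝒳 : Fin d → Type) [∀ i, Fintype (𝒳 i)]
    (π : (∀ i, 𝒳 i) → ℝ) (P : (∀ i, 𝒳 i) → (∀ i, 𝒳 i) → ℝ)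
    (S : Finset (Fin d)) : ℝ :=
  klRate (marginal 𝒳 π S) (keepIn 𝒳 π P S) (fun _ w => marginal 𝒳 π S w)

/-- Single-coordinate marginal `π^(i)`. -/
def singleMarginal (𝒳 : Fin d → Type) [∀ i, Fintype (𝒳 i)]
    (π : (∀ i, 𝒳 i) → ℝ) (i : Fin d) (a : 𝒳 i) : ℝ :=
  ∑ x : ∀ j, 𝒳 j, if x i = a then π x else 0

/-!
Write `ν(x, y) = π(x) P(x, y)` for the edge measure of the chain. Then `D(P^(S) ‖ Π^(S))` is the
mutual information of `x|_S` and `y|_S` under `ν`, i.e. `∑ ν log ν_S - ∑ ν log π_S(x|_S) -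
∑ ν log π_S(y|_S)`, where `ν_S` is the mass of the fibre of `(x|_S, y|_S)`. As `π` is a product,
`log π_S` is modular in `S`, so supermodularity reduces to submodularity of `S ↦ H(ν_S)`, which is
the nonnegativity of a conditional mutual information (from `log u ≤ u - 1`). The same inequality
gives `D ≥ 0`, hence monotonicity, since `D(∅) = 0`. For pairwise disjoint `V_i` the join of two
tuples below `𝐕` is the componentwise union, so `V_i \ (S_i ∩ T_i)` and `V_i \ (S_i ∪ T_i)` are the
union and the intersection of `V_i \ S_i` and `V_i \ T_i`, and the claim holds coordinatewise.
-/

open Finset hiding restrict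

section FiberMass

variable {Ω α β γ δ : Type*} [Fintype Ω] {ν : Ω → ℝ}

def fiberMass (ν : Ω → ℝ) (f : Ω → α) (t : Ω) : ℝ :=
  ∑ s, if f s = f t then ν s else 0

theorem fiberMass_nonneg (hν : ∀ s, 0 ≤ ν s) (f : Ω → α) (t : Ω) : 0 ≤ fiberMass ν f t :=
  sum_nonneg fun s _ => by split_ifs <;> simp [hν]

theorem le_fiberMass (hν : ∀ s, 0 ≤ ν s) (f : Ω → α) (t : Ω) : ν t ≤ fiberMass ν f t := by
  have := single_le_sum (f := fun s => if f s = f t then ν s else 0)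
    (fun s _ => by split_ifs <;> simp [hν]) (mem_univ t)
  simpa [fiberMass] using this

theorem fiberMass_pos (hν : ∀ s, 0 ≤ ν s) (f : Ω → α) {t : Ω} (ht : 0 < ν t) :
    0 < fiberMass ν f t :=
  ht.trans_le (le_fiberMass hν f t)

theorem fiberMass_eq_of_eq (f : Ω → α) {s t : Ω} (h : f s = f t) :
    fiberMass ν f s = fiberMass ν f t := by
  simp only [fiberMass, h]

theorem fiberMass_eq_sum_of_forall {f : Ω → α} {t : Ω} (h : ∀ s, f s = f t) :
    fiberMass ν f t = ∑ s, ν s := by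
  simp [fiberMass, h]

theorem sum_fiber_div_fiberMass_le_one (f : Ω → α) (t : Ω) :
    ∑ s, (if f s = f t then ν s / fiberMass ν f s else 0) ≤ 1 := by
  calc ∑ s, (if f s = f t then ν s / fiberMass ν f s else 0)
      = fiberMass ν f t / fiberMass ν f t := by
        rw [fiberMass, sum_div]
        refine sum_congr rfl fun s _ => ?_
        split_ifs with h
        · rw [fiberMass_eq_of_eq f h, fiberMass]
        · rw [zero_div]
    _ ≤ 1 := div_self_le_one _

variable (fA : Ω → α) (fB : Ω → β) (fU : Ω → γ) (fI : Ω → δ)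

theorem sum_fiber_div_fiberMass_join_le (hU : ∀ s t, fU s = fU t ↔ fA s = fA t ∧ fB s = fB t)
    (hIA : ∀ s t, fA s = fA t → fI s = fI t) (hIB : ∀ s t, fB s = fB t → fI s = fI t)
    (a b : Ω) :
    ∑ t, (if fA t = fA a ∧ fB t = fB b then ν t / fiberMass ν fU t else 0) ≤
      if fI a = fI b then 1 else 0 := by
  by_cases hab : ∃ t₀, fA t₀ = fA a ∧ fB t₀ = fB b
  · obtain ⟨t₀, hA, hB⟩ := hab
    have hfiber : ∀ t, (fA t = fA a ∧ fB t = fB b) ↔ fU t = fU t₀ := fun t => by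
      rw [hU, hA, hB]
    rw [if_pos ((hIA _ _ hA).symm.trans (hIB _ _ hB))]
    simp only [hfiber]
    exact sum_fiber_div_fiberMass_le_one fU t₀
  · push Not at hab
    rw [sum_eq_zero fun t _ => if_neg fun h => hab t h.1 h.2]
    split_ifs <;> norm_num

theorem sum_fiber_mul_fiberMass_div_le (hν : ∀ s, 0 ≤ ν s)
    (hU : ∀ s t, fU s = fU t ↔ fA s = fA t ∧ fB s = fB t)
    (hIA : ∀ s t, fA s = fA t → fI s = fI t) (hIB : ∀ s t, fB s = fB t → fI s = fI t) (b : Ω) :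
    ∑ t, (if fB t = fB b then ν t * fiberMass ν fA t / fiberMass ν fU t else 0) ≤
      fiberMass ν fI b := by
  calc ∑ t, (if fB t = fB b then ν t * fiberMass ν fA t / fiberMass ν fU t else 0)
      = ∑ a, ν a * ∑ t, (if fA t = fA a ∧ fB t = fB b then ν t / fiberMass ν fU t else 0) := by
        simp only [mul_sum, mul_ite, mul_zero]
        rw [sum_comm]
        refine sum_congr rfl fun t _ => ?_
        split_ifs with h
        · simp only [h, and_true]
          rw [mul_comm, mul_div_assoc, fiberMass, sum_mul]
          refine sum_congr rfl fun a _ => ?_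
          simp only [ite_mul, zero_mul, eq_comm]
        · simp [h]
    _ ≤ ∑ a, ν a * (if fI a = fI b then 1 else 0) :=
        sum_le_sum fun a _ => mul_le_mul_of_nonneg_left
          (sum_fiber_div_fiberMass_join_le fA fB fU fI hU hIA hIB a b) (hν a)
    _ = fiberMass ν fI b := by simp [fiberMass]

theorem sum_mul_fiberMass_ratio_le (hν : ∀ s, 0 ≤ ν s)
    (hU : ∀ s t, fU s = fU t ↔ fA s = fA t ∧ fB s = fB t)
    (hIA : ∀ s t, fA s = fA t → fI s = fI t) (hIB : ∀ s t, fB s = fB t → fI s = fI t) :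
    ∑ t, ν t * (fiberMass ν fA t * fiberMass ν fB t / (fiberMass ν fU t * fiberMass ν fI t)) ≤
      ∑ t, ν t := by
  calc ∑ t, ν t * (fiberMass ν fA t * fiberMass ν fB t / (fiberMass ν fU t * fiberMass ν fI t))
      = ∑ b, ν b / fiberMass ν fI b *
          ∑ t, (if fB t = fB b then ν t * fiberMass ν fA t / fiberMass ν fU t else 0) := by
        simp only [mul_sum, mul_ite, mul_zero]
        rw [sum_comm]
        refine sum_congr rfl fun t _ => ?_
        have hterm : ∀ b, (if fB t = fB b then
              ν b / fiberMass ν fI b * (ν t * fiberMass ν fA t / fiberMass ν fU t) else 0) =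
            (if fB b = fB t then ν b else 0) *
              (ν t * fiberMass ν fA t / fiberMass ν fU t / fiberMass ν fI t) := fun b => by
          split_ifs with h h' h'
          · rw [fiberMass_eq_of_eq fI (hIB _ _ h')]
            ring
          · exact absurd h.symm h'
          · exact absurd h'.symm h
          · rw [zero_mul]
        rw [sum_congr rfl fun b _ => hterm b, ← sum_mul, ← fiberMass]
        ring
    _ ≤ ∑ b, ν b / fiberMass ν fI b * fiberMass ν fI b :=
        sum_le_sum fun b _ => mul_le_mul_of_nonneg_left
          (sum_fiber_mul_fiberMass_div_le fA fB fU fI hν hU hIA hIB b)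
          (div_nonneg (hν b) (fiberMass_nonneg hν fI b))
    _ ≤ ∑ b, ν b := sum_le_sum fun b _ => by
        rcases eq_or_ne (fiberMass ν fI b) 0 with h | h
        · simp [h, hν b]
        · rw [div_mul_cancel₀ _ h]

/-- Nonnegativity of the conditional mutual information `I(fA; fB | fI)` under `ν`. -/
theorem sum_mul_log_fiberMass_le (hν : ∀ s, 0 ≤ ν s)
    (hU : ∀ s t, fU s = fU t ↔ fA s = fA t ∧ fB s = fB t)
    (hIA : ∀ s t, fA s = fA t → fI s = fI t) (hIB : ∀ s t, fB s = fB t → fI s = fI t) :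
    ∑ t, ν t * (Real.log (fiberMass ν fA t) + Real.log (fiberMass ν fB t)) ≤
      ∑ t, ν t * (Real.log (fiberMass ν fU t) + Real.log (fiberMass ν fI t)) := by
  have hpoint : ∀ t, ν t * (Real.log (fiberMass ν fA t) + Real.log (fiberMass ν fB t)) ≤
      ν t * (Real.log (fiberMass ν fU t) + Real.log (fiberMass ν fI t)) +
        (ν t * (fiberMass ν fA t * fiberMass ν fB t / (fiberMass ν fU t * fiberMass ν fI t))
          - ν t) := fun t => by
    rcases (hν t).eq_or_lt with h0 | hpos
    · simp [← h0]
    have hmA := fiberMass_pos hν fA hpos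
    have hmB := fiberMass_pos hν fB hpos
    have hmU := fiberMass_pos hν fU hpos
    have hmI := fiberMass_pos hν fI hpos
    have hlog := Real.log_le_sub_one_of_pos (div_pos (mul_pos hmA hmB) (mul_pos hmU hmI))
    rw [Real.log_div (mul_pos hmA hmB).ne' (mul_pos hmU hmI).ne', Real.log_mul hmA.ne' hmB.ne',
      Real.log_mul hmU.ne' hmI.ne'] at hlog
    nlinarith
  have hratio := sum_mul_fiberMass_ratio_le fA fB fU fI hν hU hIA hIB
  have hsum := sum_le_sum fun t (_ : t ∈ univ) => hpoint t
  simp only [sum_add_distrib, sum_sub_distrib] at hsum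
  linarith

end FiberMass

section Markov

variable {𝒳 : Fin d → Type} {π : (∀ i, 𝒳 i) → ℝ} {P : (∀ i, 𝒳 i) → (∀ i, 𝒳 i) → ℝ}

theorem restrict_eq_restrict_iff {S : Finset (Fin d)} {x y : ∀ i, 𝒳 i} :
    restrict 𝒳 S x = restrict 𝒳 S y ↔ ∀ i ∈ S, x i = y i := by
  simp [restrict, funext_iff]

theorem prodMap_restrict_union_eq_iff {A B : Finset (Fin d)}
    {s t : (∀ i, 𝒳 i) × (∀ i, 𝒳 i)} :
    Prod.map (restrict 𝒳 (A ∪ B)) (restrict 𝒳 (A ∪ B)) s =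
        Prod.map (restrict 𝒳 (A ∪ B)) (restrict 𝒳 (A ∪ B)) t ↔
      Prod.map (restrict 𝒳 A) (restrict 𝒳 A) s = Prod.map (restrict 𝒳 A) (restrict 𝒳 A) t ∧
        Prod.map (restrict 𝒳 B) (restrict 𝒳 B) s = Prod.map (restrict 𝒳 B) (restrict 𝒳 B) t := by
  simp only [Prod.ext_iff, Prod.map_fst, Prod.map_snd, restrict_eq_restrict_iff, mem_union,
    or_imp, forall_and]
  tauto

theorem prodMap_restrict_eq_of_subset {S T : Finset (Fin d)} (hST : S ⊆ T)
    {s t : (∀ i, 𝒳 i) × (∀ i, 𝒳 i)}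
    (h : Prod.map (restrict 𝒳 T) (restrict 𝒳 T) s = Prod.map (restrict 𝒳 T) (restrict 𝒳 T) t) :
    Prod.map (restrict 𝒳 S) (restrict 𝒳 S) s = Prod.map (restrict 𝒳 S) (restrict 𝒳 S) t := by
  simp only [Prod.ext_iff, Prod.map_fst, Prod.map_snd, restrict_eq_restrict_iff] at h ⊢
  exact ⟨fun i hi => h.1 i (hST hi), fun i hi => h.2 i (hST hi)⟩

def edgeMass (π : (∀ i, 𝒳 i) → ℝ) (P : (∀ i, 𝒳 i) → (∀ i, 𝒳 i) → ℝ)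
    (t : (∀ i, 𝒳 i) × (∀ i, 𝒳 i)) : ℝ :=
  π t.1 * P t.1 t.2

theorem edgeMass_nonneg (hπ : ∀ x, 0 ≤ π x) (hP : ∀ x y, 0 ≤ P x y)
    (t : (∀ i, 𝒳 i) × (∀ i, 𝒳 i)) :
    0 ≤ edgeMass π P t :=
  mul_nonneg (hπ _) (hP _ _)

variable [∀ i, Fintype (𝒳 i)]

def jointMarginal (𝒳 : Fin d → Type) [∀ i, Fintype (𝒳 i)]
    (π : (∀ i, 𝒳 i) → ℝ) (P : (∀ i, 𝒳 i) → (∀ i, 𝒳 i) → ℝ)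
    (S : Finset (Fin d)) (z w : ∀ i : S, 𝒳 i.1) : ℝ :=
  ∑ x, ∑ y, if restrict 𝒳 S x = z ∧ restrict 𝒳 S y = w then π x * P x y else 0

theorem sum_edgeMass (hπsum : ∑ x, π x = 1) (hProw : ∀ x, ∑ y, P x y = 1) :
    ∑ t, edgeMass π P t = 1 := by
  simp [edgeMass, Fintype.sum_prod_type, ← mul_sum, hProw, hπsum]

theorem fiberMass_edgeMass_fst (hProw : ∀ x, ∑ y, P x y = 1) (S : Finset (Fin d))
    (t : (∀ i, 𝒳 i) × (∀ i, 𝒳 i)) :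
    fiberMass (edgeMass π P) (restrict 𝒳 S ∘ Prod.fst) t = marginal 𝒳 π S (restrict 𝒳 S t.1) := by
  rw [fiberMass, marginal, Fintype.sum_prod_type]
  refine sum_congr rfl fun x _ => ?_
  split_ifs <;> simp [edgeMass, ← mul_sum, *]

theorem fiberMass_edgeMass_snd (hstat : ∀ y, ∑ x, π x * P x y = π y) (S : Finset (Fin d))
    (t : (∀ i, 𝒳 i) × (∀ i, 𝒳 i)) :
    fiberMass (edgeMass π P) (restrict 𝒳 S ∘ Prod.snd) t = marginal 𝒳 π S (restrict 𝒳 S t.2) := by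
  rw [fiberMass, marginal, Fintype.sum_prod_type_right]
  refine sum_congr rfl fun y _ => ?_
  split_ifs <;> simp [edgeMass, *]

theorem marginal_restrict (S : Finset (Fin d)) (x : ∀ i, 𝒳 i) :
    marginal 𝒳 π S (restrict 𝒳 S x) = fiberMass π (restrict 𝒳 S) x := by
  unfold marginal fiberMass
  congr!

theorem marginal_restrict_pos (hπpos : ∀ x, 0 < π x) (S : Finset (Fin d)) (x : ∀ i, 𝒳 i) :
    0 < marginal 𝒳 π S (restrict 𝒳 S x) :=
  marginal_restrict S x ▸ fiberMass_pos (fun x => (hπpos x).le) (restrict 𝒳 S) (hπpos x)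

theorem marginal_mul_keepIn (hπpos : ∀ x, 0 < π x) (S : Finset (Fin d))
    (z w : ∀ i : S, 𝒳 i.1) :
    marginal 𝒳 π S z * keepIn 𝒳 π P S z w = jointMarginal 𝒳 π P S z w := by
  by_cases hz : ∃ x, restrict 𝒳 S x = z
  · obtain ⟨x, rfl⟩ := hz
    exact mul_div_cancel₀ _ (marginal_restrict_pos hπpos S x).ne'
  · push Not at hz
    have : jointMarginal 𝒳 π P S z w = 0 :=
      sum_eq_zero fun x _ => sum_eq_zero fun y _ => if_neg fun h => hz x h.1
    rw [keepIn, ← jointMarginal, this, zero_div, mul_zero]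

theorem sum_sum_jointMarginal_mul (S : Finset (Fin d))
    (G : (∀ i : S, 𝒳 i.1) → (∀ i : S, 𝒳 i.1) → ℝ) :
    ∑ z, ∑ w, jointMarginal 𝒳 π P S z w * G z w =
      ∑ t, edgeMass π P t * G (restrict 𝒳 S t.1) (restrict 𝒳 S t.2) := by
  calc ∑ z, ∑ w, jointMarginal 𝒳 π P S z w * G z w
      = ∑ z, ∑ w, ∑ x, ∑ y,
          if restrict 𝒳 S x = z ∧ restrict 𝒳 S y = w then π x * P x y * G z w else 0 := by
        simp only [jointMarginal, sum_mul, ite_mul, zero_mul]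
    _ = ∑ x, ∑ y, ∑ z, ∑ w,
          if restrict 𝒳 S x = z ∧ restrict 𝒳 S y = w then π x * P x y * G z w else 0 := by
        refine (sum_congr rfl fun z _ => sum_comm).trans ?_
        rw [sum_comm]
        exact sum_congr rfl fun x _ => (sum_congr rfl fun z _ => sum_comm).trans sum_comm
    _ = _ := by
        rw [Fintype.sum_prod_type]
        simp [ite_and, edgeMass]

theorem jointMarginal_restrict (S : Finset (Fin d)) (t : (∀ i, 𝒳 i) × (∀ i, 𝒳 i)) :
    jointMarginal 𝒳 π P S (restrict 𝒳 S t.1) (restrict 𝒳 S t.2) =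
      fiberMass (edgeMass π P) (Prod.map (restrict 𝒳 S) (restrict 𝒳 S)) t := by
  simp [jointMarginal, fiberMass, Fintype.sum_prod_type, edgeMass, Prod.ext_iff]

theorem distToStat_eq_sum (hπpos : ∀ x, 0 < π x) (hP : ∀ x y, 0 ≤ P x y) (S : Finset (Fin d)) :
    distToStat 𝒳 π P S = ∑ t, edgeMass π P t *
      (Real.log (fiberMass (edgeMass π P) (Prod.map (restrict 𝒳 S) (restrict 𝒳 S)) t)
        - Real.log (marginal 𝒳 π S (restrict 𝒳 S t.1))
        - Real.log (marginal 𝒳 π S (restrict 𝒳 S t.2))) := by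
  calc distToStat 𝒳 π P S
      = ∑ z, ∑ w, jointMarginal 𝒳 π P S z w *
          Real.log (jointMarginal 𝒳 π P S z w / marginal 𝒳 π S z / marginal 𝒳 π S w) := by
        simp only [distToStat, klRate, marginal_mul_keepIn hπpos]
        rfl
    _ = ∑ t, edgeMass π P t *
          Real.log (fiberMass (edgeMass π P) (Prod.map (restrict 𝒳 S) (restrict 𝒳 S)) t
            / marginal 𝒳 π S (restrict 𝒳 S t.1) / marginal 𝒳 π S (restrict 𝒳 S t.2)) := by
        rw [sum_sum_jointMarginal_mul]
        simp only [jointMarginal_restrict]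
    _ = _ := sum_congr rfl fun t _ => by
        have hν := edgeMass_nonneg (fun x => (hπpos x).le) hP
        rcases (hν t).eq_or_lt with h0 | hpos
        · simp [← h0]
        rw [Real.log_div (div_pos (fiberMass_pos hν _ hpos) (marginal_restrict_pos hπpos S _)).ne'
            (marginal_restrict_pos hπpos S _).ne',
          Real.log_div (fiberMass_pos hν _ hpos).ne' (marginal_restrict_pos hπpos S _).ne']

theorem sum_singleMarginal (hπsum : ∑ x, π x = 1) (i : Fin d) :
    ∑ a, singleMarginal 𝒳 π i a = 1 := by
  simp only [singleMarginal]
  rw [sum_comm]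
  simp [hπsum]

theorem marginal_restrict_eq_prod (hπsum : ∑ x, π x = 1)
    (hprod : ∀ x : ∀ i, 𝒳 i, π x = ∏ i, singleMarginal 𝒳 π i (x i))
    (S : Finset (Fin d)) (x : ∀ i, 𝒳 i) :
    marginal 𝒳 π S (restrict 𝒳 S x) = ∏ i ∈ S, singleMarginal 𝒳 π i (x i) := by
  calc marginal 𝒳 π S (restrict 𝒳 S x)
      = ∑ s : ∀ i, 𝒳 i, ∏ i,
          if i ∈ S → s i = x i then singleMarginal 𝒳 π i (s i) else 0 := by
        rw [marginal_restrict, fiberMass]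
        refine sum_congr rfl fun s _ => ?_
        rw [Fintype.prod_ite_zero, ← hprod s]
        simp only [restrict_eq_restrict_iff]
        congr!
    _ = ∏ i, ∑ a, if i ∈ S → a = x i then singleMarginal 𝒳 π i a else 0 := by
        rw [Fintype.prod_sum]
    _ = ∏ i, if i ∈ S then singleMarginal 𝒳 π i (x i) else 1 := by
        refine prod_congr rfl fun i _ => ?_
        split_ifs with hi
        · simp [hi]
        · simp [hi, sum_singleMarginal hπsum]
    _ = ∏ i ∈ S, singleMarginal 𝒳 π i (x i) := by
        rw [prod_ite_mem, univ_inter]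

theorem marginal_mul_marginal (hπsum : ∑ x, π x = 1)
    (hprod : ∀ x : ∀ i, 𝒳 i, π x = ∏ i, singleMarginal 𝒳 π i (x i))
    (A B : Finset (Fin d)) (x : ∀ i, 𝒳 i) :
    marginal 𝒳 π A (restrict 𝒳 A x) * marginal 𝒳 π B (restrict 𝒳 B x) =
      marginal 𝒳 π (A ∪ B) (restrict 𝒳 (A ∪ B) x) *
        marginal 𝒳 π (A ∩ B) (restrict 𝒳 (A ∩ B) x) := by
  simp only [marginal_restrict_eq_prod hπsum hprod]
  exact prod_union_inter.symm

variable (hπpos : ∀ x, 0 < π x) (hP : ∀ x y, 0 ≤ P x y)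
include hπpos hP

theorem distToStat_nonneg (hπsum : ∑ x, π x = 1) (hProw : ∀ x, ∑ y, P x y = 1)
    (hstat : ∀ y, ∑ x, π x * P x y = π y) (S : Finset (Fin d)) :
    0 ≤ distToStat 𝒳 π P S := by
  have hν := edgeMass_nonneg (fun x => (hπpos x).le) hP
  have hMI := sum_mul_log_fiberMass_le (restrict 𝒳 S ∘ Prod.fst) (restrict 𝒳 S ∘ Prod.snd)
    (Prod.map (restrict 𝒳 S) (restrict 𝒳 S)) (fun _ => ()) hν (fun _ _ => Prod.ext_iff)
    (fun _ _ _ => rfl) (fun _ _ _ => rfl)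
  have hI : ∀ t, fiberMass (edgeMass π P) (fun _ => ()) t = 1 := fun _ =>
    (fiberMass_eq_sum_of_forall fun _ => rfl).trans (sum_edgeMass hπsum hProw)
  simp only [hI, Real.log_one, add_zero, fiberMass_edgeMass_fst hProw,
    fiberMass_edgeMass_snd hstat] at hMI
  rw [distToStat_eq_sum hπpos hP]
  refine (sub_nonneg.2 hMI).trans_eq ?_
  rw [← sum_sub_distrib]
  exact sum_congr rfl fun t _ => by ring

theorem distToStat_empty (hπsum : ∑ x, π x = 1) (hProw : ∀ x, ∑ y, P x y = 1) :
    distToStat 𝒳 π P ∅ = 0 := by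
  have hrestrict : ∀ x y : ∀ i, 𝒳 i, restrict 𝒳 ∅ x = restrict 𝒳 ∅ y := fun x y =>
    restrict_eq_restrict_iff.2 fun i hi => absurd hi (notMem_empty i)
  have hmarg : ∀ x, fiberMass π (restrict 𝒳 ∅) x = 1 := fun x =>
    (fiberMass_eq_sum_of_forall fun s => hrestrict s x).trans hπsum
  have hjoint : ∀ t, fiberMass (edgeMass π P) (Prod.map (restrict 𝒳 ∅) (restrict 𝒳 ∅)) t = 1 :=
    fun _ => (fiberMass_eq_sum_of_forall fun _ => Prod.ext (hrestrict _ _) (hrestrict _ _)).trans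
      (sum_edgeMass hπsum hProw)
  simp [distToStat_eq_sum hπpos hP, marginal_restrict, hmarg, hjoint]

theorem distToStat_supermodular (hπsum : ∑ x, π x = 1)
    (hprod : ∀ x : ∀ i, 𝒳 i, π x = ∏ i, singleMarginal 𝒳 π i (x i)) (A B : Finset (Fin d)) :
    distToStat 𝒳 π P A + distToStat 𝒳 π P B ≤
      distToStat 𝒳 π P (A ∩ B) + distToStat 𝒳 π P (A ∪ B) := by
  have hν := edgeMass_nonneg (fun x => (hπpos x).le) hP
  have hMI := sum_mul_log_fiberMass_le (Prod.map (restrict 𝒳 A) (restrict 𝒳 A))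
    (Prod.map (restrict 𝒳 B) (restrict 𝒳 B)) (Prod.map (restrict 𝒳 (A ∪ B)) (restrict 𝒳 (A ∪ B)))
    (Prod.map (restrict 𝒳 (A ∩ B)) (restrict 𝒳 (A ∩ B))) hν
    (fun _ _ => prodMap_restrict_union_eq_iff)
    (fun _ _ => prodMap_restrict_eq_of_subset inter_subset_left)
    (fun _ _ => prodMap_restrict_eq_of_subset inter_subset_right)
  have hlog : ∀ x, Real.log (marginal 𝒳 π A (restrict 𝒳 A x))
      + Real.log (marginal 𝒳 π B (restrict 𝒳 B x)) =
      Real.log (marginal 𝒳 π (A ∪ B) (restrict 𝒳 (A ∪ B) x))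
      + Real.log (marginal 𝒳 π (A ∩ B) (restrict 𝒳 (A ∩ B) x)) := fun x => by
    rw [← Real.log_mul (marginal_restrict_pos hπpos A x).ne' (marginal_restrict_pos hπpos B x).ne',
      ← Real.log_mul (marginal_restrict_pos hπpos _ x).ne' (marginal_restrict_pos hπpos _ x).ne',
      marginal_mul_marginal hπsum hprod]
  rw [distToStat_eq_sum hπpos hP A, distToStat_eq_sum hπpos hP B,
    distToStat_eq_sum hπpos hP (A ∩ B), distToStat_eq_sum hπpos hP (A ∪ B), ← sub_nonneg,
    ← sum_add_distrib, ← sum_add_distrib, ← sum_sub_distrib]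
  convert sub_nonneg.2 hMI using 1
  rw [← sum_sub_distrib]
  refine sum_congr rfl fun t _ => ?_
  linear_combination edgeMass π P t * (hlog t.1 + hlog t.2)

theorem distToStat_monotone (hπsum : ∑ x, π x = 1) (hProw : ∀ x, ∑ y, P x y = 1)
    (hstat : ∀ y, ∑ x, π x * P x y = π y)
    (hprod : ∀ x : ∀ i, 𝒳 i, π x = ∏ i, singleMarginal 𝒳 π i (x i)) :
    Monotone (distToStat 𝒳 π P) := fun A B hAB => by
  have h := distToStat_supermodular hπpos hP hπsum hprod A (B \ A)
  rw [inter_sdiff_self, union_sdiff_of_subset hAB, distToStat_empty hπpos hP hπsum hProw] at h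
  linarith [distToStat_nonneg hπpos hP hπsum hProw hstat (B \ A)]

end Markov

section Tuple

variable {α : Type*} [DecidableEq α] {k : ℕ} {V S T : Fin k → Finset α}

theorem kSup_eq_union (hV : PwDisj V) (hS : ∀ i, S i ⊆ V i) (hT : ∀ i, T i ⊆ V i) (i : Fin k) :
    kSup S T i = S i ∪ T i :=
  sdiff_eq_self_of_disjoint <| (disjoint_biUnion_right _ _ _).2 fun j hj =>
    (hV i j (ne_of_mem_erase hj).symm).mono (union_subset (hS i) (hT i))
      (union_subset (hS j) (hT j))

theorem sum_sdiff_add_sum_sdiff_le {F : Finset α → ℝ}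
    (hF : ∀ A B, F A + F B ≤ F (A ∩ B) + F (A ∪ B))
    (hV : PwDisj V) (hS : ∀ i, S i ⊆ V i) (hT : ∀ i, T i ⊆ V i) :
    ∑ i, F (V i \ S i) + ∑ i, F (V i \ T i) ≤
      ∑ i, F (V i \ kInf S T i) + ∑ i, F (V i \ kSup S T i) := by
  simp only [← sum_add_distrib, kSup_eq_union hV hS hT, kInf, sdiff_inter_distrib_right,
    sdiff_union_distrib]
  exact sum_le_sum fun i _ => (hF _ _).trans_eq (add_comm _ _)

end Tuple

theorem distToStat_complement_tuple_antitone_and_k_supermodular_general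
    (𝒳 : Fin d → Type) [∀ i, Fintype (𝒳 i)]
    (π : (∀ i, 𝒳 i) → ℝ) (P : (∀ i, 𝒳 i) → (∀ i, 𝒳 i) → ℝ)
    (hπpos : ∀ x, 0 < π x) (hπsum : ∑ x, π x = 1)
    (hPnonneg : ∀ x y, 0 ≤ P x y) (hProw : ∀ x, ∑ y, P x y = 1)
    (hstat : ∀ y, ∑ x, π x * P x y = π y)
    (hprod : ∀ x : ∀ i, 𝒳 i, π x = ∏ i, singleMarginal 𝒳 π i (x i))
    (k : ℕ) (V : Fin k → Finset (Fin d)) (hV : PwDisj V) :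
    (∀ S T : Fin k → Finset (Fin d), PwDisj S → PwDisj T →
        (∀ i, S i ⊆ T i) → (∀ i, T i ⊆ V i) →
        (∑ i, distToStat 𝒳 π P (V i \ T i)) ≤ ∑ i, distToStat 𝒳 π P (V i \ S i)) ∧
    (∀ S T : Fin k → Finset (Fin d), PwDisj S → PwDisj T →
        (∀ i, S i ⊆ V i) → (∀ i, T i ⊆ V i) →
        (∑ i, distToStat 𝒳 π P (V i \ S i)) + (∑ i, distToStat 𝒳 π P (V i \ T i)) ≤
          (∑ i, distToStat 𝒳 π P (V i \ kInf S T i)) +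
            (∑ i, distToStat 𝒳 π P (V i \ kSup S T i))) := by
  refine ⟨fun S T _ _ hST _ => sum_le_sum fun i _ => ?_, fun S T _ _ hS hT => ?_⟩
  · exact distToStat_monotone hπpos hPnonneg hπsum hProw hstat hprod
      (sdiff_subset_sdiff subset_rfl (hST i))
  · exact sum_sdiff_add_sum_sdiff_le (distToStat_supermodular hπpos hPnonneg hπsum hprod) hV hS hT

/-- If `P` is `π`-stationary with `π` of product form and
`𝐕 ∈ (k+1)^⟦d⟧` is fixed, then the map
`𝐒 ↦ D(⊗_{i=1}^k P^(V_i \ S_i) ‖ ⊗_{i=1}^k Π^(V_i \ S_i))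
  = Σ_{i=1}^k D(P^(V_i \ S_i) ‖ Π^(V_i \ S_i))`,
defined on `{𝐒 ∈ (k+1)^⟦d⟧ : 𝐒 ≼ 𝐕}`, is monotonically non-increasing and
`k`-supermodular. -/
theorem distToStat_complement_tuple_antitone_and_k_supermodular
    (𝒳 : Fin d → Type) [∀ i, Fintype (𝒳 i)] [∀ i, Nonempty (𝒳 i)]
    (π : (∀ i, 𝒳 i) → ℝ) (P : (∀ i, 𝒳 i) → (∀ i, 𝒳 i) → ℝ)
    (hπpos : ∀ x, 0 < π x) (hπsum : ∑ x, π x = 1)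
    (hPnonneg : ∀ x y, 0 ≤ P x y) (hProw : ∀ x, ∑ y, P x y = 1)
    (hstat : ∀ y, ∑ x, π x * P x y = π y)
    (hprod : ∀ x : ∀ i, 𝒳 i, π x = ∏ i, singleMarginal 𝒳 π i (x i))
    (k : ℕ) (V : Fin k → Finset (Fin d)) (hV : PwDisj V) :
    (∀ S T : Fin k → Finset (Fin d), PwDisj S → PwDisj T →
        (∀ i, S i ⊆ T i) → (∀ i, T i ⊆ V i) →
        (∑ i, distToStat 𝒳 π P (V i \ T i)) ≤ ∑ i, distToStat 𝒳 π P (V i \ S i)) ∧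
    (∀ S T : Fin k → Finset (Fin d), PwDisj S → PwDisj T →
        (∀ i, S i ⊆ V i) → (∀ i, T i ⊆ V i) →
        (∑ i, distToStat 𝒳 π P (V i \ S i)) + (∑ i, distToStat 𝒳 π P (V i \ T i)) ≤
          (∑ i, distToStat 𝒳 π P (V i \ kInf S T i)) +
            (∑ i, distToStat 𝒳 π P (V i \ kSup S T i))) :=
  distToStat_complement_tuple_antitone_and_k_supermodular_general 𝒳 π P hπpos hπsum hPnonneg hProw
    hstat hprod k V hV

end
end
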